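/- arXiv:2405.13909 — 2 statements merged into one kernel-verified Lean document; each statement's English description precedes it below -/
import Mathlib

section
/- Let T be a map sending each smooth function Ψ : ℝⁿ → ℝ to a function T[Ψ] : ℝⁿ → ℝ, let p ∈ ℝⁿ, and let M be a natural number. Let Ψ, Ψ̄ be smooth functions whose iterated derivatives of all orders j ≤ M coincide at p, and set Ψ_s := (1−s)Ψ + sΨ̄ for s ∈ [0,1]. Assume: (i) the function s ↦ T[Ψ_s](p) is differentiable on [0,1] with derivative at each s equal to the Gateaux variation ∂T[Ψ_s](Ψ̄ − Ψ)(p) := lim_{h→0} (T[Ψ_s + h(Ψ̄ − Ψ)](p) − T[Ψ_s](p))/h; (ii) for every s ∈ [0,1] and every smooth Φ whose iterated derivatives of all orders j ≤ M vanish at p, the Gateaux variation ∂T[Ψ_s](Φ)(p) exists and equals 0. Then T[Ψ](p) = T[Ψ̄](p). -/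
open Filter Topology

/-- The integral argument: if `s ↦ T[Ψ_s](p)` (with `Ψ_s = (1−s)Ψ + sΨ̄`) is
differentiable on `[0,1]` with derivative the Gateaux variation
`∂T[Ψ_s](Ψ̄ − Ψ)(p)`, and the Gateaux variation at `p` vanishes on every field
whose `M`-jet vanishes at `p`, then two fields with the same `M`-jet at `p`
give the same value `T[·](p)`. -/
theorem stmt_8 (n : ℕ)
    (T : (EuclideanSpace ℝ (Fin n) → ℝ) → (EuclideanSpace ℝ (Fin n) → ℝ))
    (p : EuclideanSpace ℝ (Fin n)) (M : ℕ)
    (Ψ Ψ' : EuclideanSpace ℝ (Fin n) → ℝ)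
    (hΨ : ContDiff ℝ (⊤ : ℕ∞) Ψ) (hΨ' : ContDiff ℝ (⊤ : ℕ∞) Ψ')
    (hjet : ∀ j ≤ M, iteratedFDeriv ℝ j Ψ p = iteratedFDeriv ℝ j Ψ' p)
    (D : ℝ → ℝ)
    -- (i) s ↦ T[Ψ_s](p) is differentiable on [0,1] with derivative D s,
    -- and D s is the Gateaux variation ∂T[Ψ_s](Ψ' − Ψ)(p)
    (hderiv : ∀ s ∈ Set.Icc (0 : ℝ) 1,
      HasDerivWithinAt (fun t : ℝ => T ((1 - t) • Ψ + t • Ψ') p) (D s)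
        (Set.Icc (0 : ℝ) 1) s)
    (hgateaux : ∀ s ∈ Set.Icc (0 : ℝ) 1,
      Tendsto (fun h : ℝ =>
          (T (((1 - s) • Ψ + s • Ψ') + h • (Ψ' - Ψ)) p -
            T ((1 - s) • Ψ + s • Ψ') p) / h)
        (𝓝[≠] 0) (𝓝 (D s)))
    -- (ii) the Gateaux variation at p vanishes on fields with vanishing M-jet at p
    (hvanish : ∀ s ∈ Set.Icc (0 : ℝ) 1, ∀ Φ, ContDiff ℝ (⊤ : ℕ∞) Φ →
      (∀ j ≤ M, iteratedFDeriv ℝ j Φ p = 0) →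
      Tendsto (fun h : ℝ =>
          (T (((1 - s) • Ψ + s • Ψ') + h • Φ) p - T ((1 - s) • Ψ + s • Ψ') p) / h)
        (𝓝[≠] 0) (𝓝 0)) :
    T Ψ p = T Ψ' p := by
  -- D s = 0 for s ∈ [0,1]
  have hD0 : ∀ s ∈ Set.Icc (0 : ℝ) 1, D s = 0 := by
    intro s hs
    have hjet' : ∀ j ≤ M, iteratedFDeriv ℝ j (Ψ' - Ψ) p = 0 := by
      intro j hj
      have : Ψ' - Ψ = Ψ' + -Ψ := by ring_nf
      rw [this, iteratedFDeriv_add_apply (g := -Ψ) (hΨ'.of_le (by exact_mod_cast le_top)).contDiffAt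
        ((hΨ.of_le (by exact_mod_cast le_top)).neg).contDiffAt, iteratedFDeriv_neg_apply, ← hjet j hj,
        add_neg_cancel]
    exact tendsto_nhds_unique (hgateaux s hs)
      (hvanish s hs (Ψ' - Ψ) (hΨ'.sub hΨ) hjet')
  set f : ℝ → ℝ := fun t => T ((1 - t) • Ψ + t • Ψ') p with hf
  have hconst : ∀ x ∈ Set.Icc (0 : ℝ) 1, f x = f 0 := by
    apply constant_of_has_deriv_right_zero
      (fun x hx => (hderiv x hx).continuousWithinAt)
    intro x hx
    have := (hderiv x (Set.mem_Icc_of_Ico hx)).mono_of_mem_nhdsWithin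
      (Icc_mem_nhdsGE_of_mem hx)
    rwa [hD0 x (Set.mem_Icc_of_Ico hx)] at this
  have h1 := hconst 1 (Set.right_mem_Icc.2 zero_le_one)
  simp only [hf, sub_self, sub_zero, zero_smul, one_smul, add_zero, zero_add] at h1
  exact h1.symm
end

section
/- Let X be a topological space, p ∈ X, n a positive natural number, and let A, B : X → Matrix (Fin n) (Fin n) ℝ be continuous maps such that A(x) and B(x) are invertible for every x ∈ X and A(p) = B(p). Then there exists an open neighborhood U of p such that for every x ∈ U and every λ ∈ [0,1], the matrix λ·A(x) + (1−λ)·B(x) is invertible. -/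
/-- Two continuous families of invertible matrices that agree at a point `p`
can be joined by the linear homotopy `λA + (1−λ)B` through invertible matrices
on a neighborhood of `p`. -/
theorem stmt_11 (X : Type*) [TopologicalSpace X] (p : X) (n : ℕ) (hn : 0 < n)
    (A B : X → Matrix (Fin n) (Fin n) ℝ)
    (hA : Continuous A) (hB : Continuous B)
    (hAinv : ∀ x, IsUnit (A x)) (hBinv : ∀ x, IsUnit (B x))
    (hAB : A p = B p) :
    ∃ U : Set X, IsOpen U ∧ p ∈ U ∧
      ∀ x ∈ U, ∀ l ∈ Set.Icc (0 : ℝ) 1, IsUnit (l • A x + (1 - l) • B x) := by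
  set f : X × ℝ → Matrix (Fin n) (Fin n) ℝ :=
    fun q => q.2 • A q.1 + (1 - q.2) • B q.1 with hf
  have hfc : Continuous f := by
    apply Continuous.add
    · exact continuous_snd.smul (hA.comp continuous_fst)
    · exact (continuous_const.sub continuous_snd).smul (hB.comp continuous_fst)
  have hdet : Continuous fun q => (f q).det := hfc.matrix_det
  set S : Set (X × ℝ) := {q | (f q).det ≠ 0} with hS
  have hSopen : IsOpen S := isOpen_compl_iff.mpr (isClosed_eq hdet continuous_const)
  have hsub : ({p} ×ˢ Set.Icc (0 : ℝ) 1) ⊆ S := by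
    rintro ⟨x, l⟩ ⟨hx, hl⟩
    simp only [Set.mem_singleton_iff] at hx
    subst hx
    have : f (x, l) = A x := by
      show l • A x + (1 - l) • B x = A x
      rw [hAB, ← add_smul]
      norm_num
    simp only [hS, Set.mem_setOf_eq, this]
    exact ((Matrix.isUnit_iff_isUnit_det _).mp (hAinv x)).ne_zero
  obtain ⟨u, v, hu, hv, hpu, hIv, huv⟩ :=
    generalized_tube_lemma isCompact_singleton isCompact_Icc hSopen hsub
  refine ⟨u, hu, hpu rfl, fun x hx l hl => ?_⟩
  have : ((x, l) : X × ℝ) ∈ S := huv ⟨hx, hIv hl⟩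
  exact (Matrix.isUnit_iff_isUnit_det _).mpr (isUnit_iff_ne_zero.mpr this)
end
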